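/- arXiv:1903.02117 — 3 statements merged into one kernel-verified Lean document; each statement's English description precedes it below -/
import Mathlib

section
/- Let g be a convex function on R^n, v ∈ R^n, d a nonzero subgradient of g⁺ = max{g,0} at v, and β > 0. Define y = v − β·(g⁺(v)/‖d‖²)·d. Then for any z̄ with g⁺(z̄) = 0 it holds that ‖y − z̄‖² ≤ ‖v − z̄‖² − β(2 − β)·(g⁺(v))²/‖d‖². -/
theorem stmt3 {n : ℕ} (g : EuclideanSpace ℝ (Fin n) → ℝ) (hg : ConvexOn ℝ Set.univ g)
    (v d : EuclideanSpace ℝ (Fin n)) (hd0 : d ≠ 0)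
    (hd : ∀ w, max (g w) 0 ≥ max (g v) 0 + (inner ℝ d (w - v) : ℝ))
    (β : ℝ) (hβ : 0 < β)
    (y : EuclideanSpace ℝ (Fin n)) (hy : y = v - (β * max (g v) 0 / ‖d‖ ^ 2) • d)
    (z : EuclideanSpace ℝ (Fin n)) (hz : max (g z) 0 = 0) :
    ‖y - z‖ ^ 2 ≤ ‖v - z‖ ^ 2 - β * (2 - β) * (max (g v) 0) ^ 2 / ‖d‖ ^ 2 := by
  set G := max (g v) 0 with hG
  have hGnn : 0 ≤ G := le_max_right _ _
  have hdn : (0:ℝ) < ‖d‖ ^ 2 := pow_pos (norm_pos_iff.mpr hd0) 2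
  set t : ℝ := β * G / ‖d‖ ^ 2 with ht
  have htnn : 0 ≤ t := by positivity
  have hsub : (inner ℝ d (v - z) : ℝ) ≥ G := by
    have := hd z
    rw [hz] at this
    have h2 : (inner ℝ d (z - v) : ℝ) = - inner ℝ d (v - z) := by
      rw [← inner_neg_right]; congr 1; abel
    rw [h2] at this; linarith
  have hyz : y - z = (v - z) - t • d := by rw [hy]; abel
  have hexp : ‖y - z‖ ^ 2 = ‖v - z‖ ^ 2 - 2 * t * (inner ℝ d (v - z) : ℝ) + t ^ 2 * ‖d‖ ^ 2 := by
    rw [hyz, @norm_sub_sq_real, inner_smul_right, norm_smul, real_inner_comm]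
    simp [mul_pow, abs_mul_abs_self, sq_abs]
    ring
  rw [hexp]
  have key : t ^ 2 * ‖d‖ ^ 2 = β ^ 2 * G ^ 2 / ‖d‖ ^ 2 := by
    rw [ht]; field_simp
  have h3 : 2 * t * G = 2 * β * G ^ 2 / ‖d‖ ^ 2 := by
    rw [ht]; field_simp
  have h4 : 2 * t * (inner ℝ d (v - z) : ℝ) ≥ 2 * t * G :=
    mul_le_mul_of_nonneg_left hsub (by positivity)
  rw [key]
  have : β * (2 - β) * G ^ 2 / ‖d‖ ^ 2 = 2 * β * G ^ 2 / ‖d‖ ^ 2 - β ^ 2 * G ^ 2 / ‖d‖ ^ 2 := by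
    ring
  rw [this]
  linarith
end

section
/- Let Y ⊆ R^n be closed convex, f: R^n → R convex with subgradients bounded by M_f on Y, X ⊆ Y closed convex, x* ∈ X with f(x*) = f* = min_{x∈X} f, and suppose f(x) ≥ f* + (μ/2)‖x − x*‖² for all x ∈ Y (μ > 0). For x_k ∈ Y, stepsize α_k > 0, subgradient s_f(x_k) of f at x_k, set v_{k+1} = Π_Y[x_k − α_k s_f(x_k)]. Then for any ρ ∈ (0,1): ‖v_{k+1} − x*‖² + 2α_k(1−ρ)(f(Π_X[x_k]) − f*) ≤ (1 − α_k ρ μ)‖x_k − x*‖² + 2α_k(1−ρ)M_f‖Π_X[x_k] − x_k‖ + α_k² M_f². -/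
open InnerProductSpace in
lemma exists_subgrad {n : ℕ} (f : EuclideanSpace ℝ (Fin n) → ℝ)
    (hconv : ConvexOn ℝ Set.univ f) (p : EuclideanSpace ℝ (Fin n)) :
    ∃ s : EuclideanSpace ℝ (Fin n), ∀ y, f y ≥ f p + (inner ℝ s (y - p) : ℝ) := by
  have hcont : Continuous f := by
    have := hconv.continuousOn isOpen_univ
    rwa [continuousOn_univ] at this
  set S : Set (EuclideanSpace ℝ (Fin n) × ℝ) := {q | f q.1 < q.2} with hS
  have hSopen : IsOpen S := by
    have h : S = (fun q : EuclideanSpace ℝ (Fin n) × ℝ => q.2 - f q.1) ⁻¹' Set.Ioi 0 := by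
      ext q; simp [hS, sub_pos]
    rw [h]
    exact (continuous_snd.sub (hcont.comp continuous_fst)).isOpen_preimage _ isOpen_Ioi
  have hSconv : Convex ℝ S := by
    rintro ⟨x₁, t₁⟩ h₁ ⟨x₂, t₂⟩ h₂ a b ha hb hab
    simp only [hS, Set.mem_setOf_eq] at h₁ h₂ ⊢
    have hcc := hconv.2 (Set.mem_univ x₁) (Set.mem_univ x₂) ha hb hab
    simp only [smul_eq_mul] at hcc
    simp only [Prod.smul_mk, Prod.mk_add_mk, smul_eq_mul]
    rcases eq_or_lt_of_le ha with rfl | ha'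
    · simp only [zero_add] at hab; subst hab; simpa using h₂
    · nlinarith [mul_lt_mul_of_pos_left h₁ ha', mul_le_mul_of_nonneg_left h₂.le hb]
  have hpnot : (p, f p) ∉ S := by simp [hS]
  obtain ⟨ℓ, hℓ⟩ := geometric_hahn_banach_open_point hSconv hSopen hpnot
  set c : ℝ := ℓ (0, 1) with hc
  have hdecomp : ∀ (y : EuclideanSpace ℝ (Fin n)) (t : ℝ), ℓ (y, t) = ℓ (y, 0) + t * c := by
    intro y t
    have h : (y, t) = (y, (0:ℝ)) + t • ((0 : EuclideanSpace ℝ (Fin n)), (1:ℝ)) := by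
      simp [Prod.ext_iff]
    rw [h, map_add, map_smul]
    simp [hc]
  have hcneg : c < 0 := by
    have h1 := hℓ (p, f p + 1) (by simp [hS])
    rw [hdecomp p (f p + 1), hdecomp p (f p)] at h1
    linarith
  have hkey : ∀ y, ℓ (y, 0) + f y * c ≤ ℓ (p, 0) + f p * c := by
    intro y
    refine le_of_forall_pos_lt_add fun ε hε => ?_
    have hcpos : 0 < -c := by linarith
    have hεc : 0 < ε / (-c) := div_pos hε hcpos
    have h2 := hℓ (y, f y + ε / (-c)) (by simp only [hS, Set.mem_setOf_eq]; linarith)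
    rw [hdecomp y _, hdecomp p _] at h2
    have h3 : ε / (-c) * c = -ε := by rw [div_mul_eq_mul_div, div_neg, mul_div_assoc, div_self hcneg.ne, mul_one]
    nlinarith
  set L : EuclideanSpace ℝ (Fin n) →L[ℝ] ℝ :=
    ℓ.comp (ContinuousLinearMap.inl ℝ (EuclideanSpace ℝ (Fin n)) ℝ) with hL
  have hLapp : ∀ y, L y = ℓ (y, 0) := fun y => rfl
  have hcpos : 0 < -c := by linarith
  refine ⟨(toDual ℝ (EuclideanSpace ℝ (Fin n))).symm ((-c)⁻¹ • L), fun y => ?_⟩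
  have hip : (inner ℝ ((toDual ℝ (EuclideanSpace ℝ (Fin n))).symm ((-c)⁻¹ • L)) (y - p) : ℝ)
      = (-c)⁻¹ * (L y - L p) := by
    rw [toDual_symm_apply]
    simp [map_sub, mul_sub]
  rw [ge_iff_le, hip]
  have hk := hkey y
  rw [← hLapp y, ← hLapp p] at hk
  have hfinal : (-c)⁻¹ * (L y - L p) ≤ f y - f p := by
    rw [inv_mul_le_iff₀ hcpos]
    nlinarith [hk]
  linarith

set_option maxHeartbeats 1000000 in
theorem stmt15 {n : ℕ} (f : EuclideanSpace ℝ (Fin n) → ℝ)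
    (hconv : ConvexOn ℝ Set.univ f)
    (Y X : Set (EuclideanSpace ℝ (Fin n)))
    (hYcl : IsClosed Y) (hYconv : Convex ℝ Y)
    (hXcl : IsClosed X) (hXconv : Convex ℝ X) (hXY : X ⊆ Y)
    (Mf μ : ℝ) (hMf : 0 < Mf) (hμ : 0 < μ)
    (hsub : ∀ x ∈ Y, ∀ s, (∀ y, f y ≥ f x + (inner ℝ s (y - x) : ℝ)) → ‖s‖ ≤ Mf)
    (xs : EuclideanSpace ℝ (Fin n)) (hxs : xs ∈ X)
    (hmin : ∀ x ∈ X, f xs ≤ f x)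
    (hsc : ∀ x ∈ Y, f x ≥ f xs + μ / 2 * ‖x - xs‖ ^ 2)
    (xk : EuclideanSpace ℝ (Fin n)) (hxk : xk ∈ Y)
    (α : ℝ) (hα : 0 < α)
    (s : EuclideanSpace ℝ (Fin n)) (hs : ∀ y, f y ≥ f xk + (inner ℝ s (y - xk) : ℝ))
    (v : EuclideanSpace ℝ (Fin n)) (hvY : v ∈ Y)
    (hvproj : ∀ x ∈ Y, ‖v - (xk - α • s)‖ ≤ ‖x - (xk - α • s)‖)
    (p : EuclideanSpace ℝ (Fin n)) (hpX : p ∈ X)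
    (hpproj : ∀ z ∈ X, ‖p - xk‖ ≤ ‖z - xk‖)
    (ρ : ℝ) (hρ : ρ ∈ Set.Ioo (0 : ℝ) 1) :
    ‖v - xs‖ ^ 2 + 2 * α * (1 - ρ) * (f p - f xs) ≤
      (1 - α * ρ * μ) * ‖xk - xs‖ ^ 2 + 2 * α * (1 - ρ) * Mf * ‖p - xk‖
        + α ^ 2 * Mf ^ 2 := by
  obtain ⟨hρ0, hρ1⟩ := hρ
  set z := xk - α • s with hz
  have hxsY : xs ∈ Y := hXY hxs
  haveI : Nonempty Y := ⟨⟨v, hvY⟩⟩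
  have hinf : ‖z - v‖ = ⨅ w : Y, ‖z - w‖ := by
    apply le_antisymm
    · apply le_ciInf
      intro w
      have := hvproj w w.2
      rw [norm_sub_rev, norm_sub_rev z w]
      exact this
    · exact ciInf_le ⟨0, fun x ⟨w, hw⟩ => hw ▸ norm_nonneg _⟩ (⟨v, hvY⟩ : Y)
  have hchar : ∀ w ∈ Y, (inner ℝ (z - v) (w - v) : ℝ) ≤ 0 :=
    (norm_eq_iInf_iff_real_inner_le_zero hYconv hvY).mp hinf
  have hxschar := hchar xs hxsY
  have key : ‖v - xs‖ ^ 2 ≤ ‖z - xs‖ ^ 2 := by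
    have hexp : ‖z - xs‖ ^ 2 = ‖z - v‖ ^ 2 + 2 * (inner ℝ (z - v) (v - xs) : ℝ) + ‖v - xs‖ ^ 2 := by
      have := norm_add_sq_real (z - v) (v - xs)
      have h2 : z - v + (v - xs) = z - xs := by abel
      rw [h2] at this
      linarith [this]
    have hneg : (inner ℝ (z - v) (v - xs) : ℝ) = -(inner ℝ (z - v) (xs - v) : ℝ) := by
      rw [← inner_neg_right]; congr 1; abel
    nlinarith [sq_nonneg ‖z - v‖, hxschar]
  have hexp2 : ‖z - xs‖ ^ 2 = ‖xk - xs‖ ^ 2 - 2 * α * (inner ℝ s (xk - xs) : ℝ)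
      + α ^ 2 * ‖s‖ ^ 2 := by
    have h1 : z - xs = (xk - xs) - α • s := by rw [hz]; abel
    rw [h1, norm_sub_sq_real, inner_smul_right, norm_smul, real_inner_comm]
    simp [abs_of_pos hα, mul_pow]
    ring
  have hsnorm : ‖s‖ ≤ Mf := hsub xk hxk s hs
  have h2 : (inner ℝ s (xk - xs) : ℝ) ≥ f xk - f xs := by
    have h := hs xs
    have hn : (inner ℝ s (xs - xk) : ℝ) = -(inner ℝ s (xk - xs) : ℝ) := by
      rw [← inner_neg_right]; congr 1; abel
    rw [hn] at h
    linarith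
  have h3 : f xk - f xs ≥ μ / 2 * ‖xk - xs‖ ^ 2 := by linarith [hsc xk hxk]
  have h4 : f xk - f xs ≥ f p - f xs - Mf * ‖p - xk‖ := by
    obtain ⟨sp, hsp⟩ := exists_subgrad f hconv p
    have hspn : ‖sp‖ ≤ Mf := hsub p (hXY hpX) sp hsp
    have hb : |(inner ℝ sp (xk - p) : ℝ)| ≤ ‖sp‖ * ‖xk - p‖ := abs_real_inner_le_norm sp (xk - p)
    have hb2 : -(Mf * ‖p - xk‖) ≤ (inner ℝ sp (xk - p) : ℝ) := by
      rw [norm_sub_rev p xk]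
      have := abs_le.mp hb
      nlinarith [norm_nonneg (xk - p)]
    have := hsp xk
    linarith
  have hI : (inner ℝ s (xk - xs) : ℝ) ≥ ρ * (μ / 2 * ‖xk - xs‖ ^ 2)
      + (1 - ρ) * (f p - f xs - Mf * ‖p - xk‖) := by
    have e3 : ρ * (μ / 2 * ‖xk - xs‖ ^ 2) ≤ ρ * (f xk - f xs) :=
      mul_le_mul_of_nonneg_left h3 hρ0.le
    have e4 : (1 - ρ) * (f p - f xs - Mf * ‖p - xk‖) ≤ (1 - ρ) * (f xk - f xs) :=
      mul_le_mul_of_nonneg_left h4 (by linarith)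
    nlinarith [e3, e4, h2]
  have hss : α ^ 2 * ‖s‖ ^ 2 ≤ α ^ 2 * Mf ^ 2 := by
    have := mul_self_le_mul_self (norm_nonneg s) hsnorm
    nlinarith [sq_nonneg α]
  nlinarith [key, hexp2, hss,
    mul_le_mul_of_nonneg_left hI (by positivity : (0:ℝ) ≤ 2 * α)]
end

section
/- Under the setting of the parallel minibatch feasibility step: let v ∈ R^n, β > 0, and for i = 1,…,N let g_i ≥ 0, d_i ∈ R^n nonzero, and z_i = v − β·(g_i/‖d_i‖²)·d_i; set z̄ = (1/N)∑_{i=1}^N z_i. Suppose for each i and each y in a closed convex set X, ‖z_i − y‖² ≤ ‖v − y‖² − β(2−β)·g_i²/‖d_i‖². Then for any y ∈ X: ‖z̄ − y‖² ≤ ‖v − y‖² − (β(2−β)/N)∑_{i=1}^N g_i²/‖d_i‖² − β²·V, where V = (1/N)∑_{i=1}^N ‖(g_i/‖d_i‖²)d_i − (1/N)∑_{j=1}^N (g_j/‖d_j‖²)d_j‖². -/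
theorem stmt16 {n N : ℕ} (hN : 0 < N) (v : EuclideanSpace ℝ (Fin n))
    (β : ℝ) (hβ : 0 < β)
    (g : Fin N → ℝ) (hg : ∀ i, 0 ≤ g i)
    (d : Fin N → EuclideanSpace ℝ (Fin n)) (hd : ∀ i, d i ≠ 0)
    (X : Set (EuclideanSpace ℝ (Fin n))) (hXcl : IsClosed X) (hXconv : Convex ℝ X)
    (z : Fin N → EuclideanSpace ℝ (Fin n))
    (hz : ∀ i, z i = v - (β * g i / ‖d i‖ ^ 2) • d i)
    (hstep : ∀ i, ∀ y ∈ X, ‖z i - y‖ ^ 2 ≤ ‖v - y‖ ^ 2 - β * (2 - β) * (g i) ^ 2 / ‖d i‖ ^ 2) :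
    ∀ y ∈ X, ‖(N : ℝ)⁻¹ • (∑ i, z i) - y‖ ^ 2 ≤
      ‖v - y‖ ^ 2 - (β * (2 - β) / N) * (∑ i, (g i) ^ 2 / ‖d i‖ ^ 2)
        - β ^ 2 * ((N : ℝ)⁻¹ * ∑ i, ‖(g i / ‖d i‖ ^ 2) • d i -
            (N : ℝ)⁻¹ • ∑ j, (g j / ‖d j‖ ^ 2) • d j‖ ^ 2) := by
  intro y hy
  have hN' : (N : ℝ) ≠ 0 := Nat.cast_ne_zero.mpr hN.ne'
  have hNpos : (0:ℝ) < N := Nat.cast_pos.mpr hN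
  set w : Fin N → EuclideanSpace ℝ (Fin n) := fun i => (g i / ‖d i‖ ^ 2) • d i with hw
  set zbar := (N:ℝ)⁻¹ • (∑ i, z i) with hzbar
  set wbar := (N:ℝ)⁻¹ • (∑ j, w j) with hwbar
  have hzsum : ∑ i, z i = (N:ℝ) • v - β • ∑ j, w j := by
    simp only [hz, hw]
    rw [Finset.sum_sub_distrib, Finset.sum_const, Finset.card_univ, Fintype.card_fin,
      Finset.smul_sum]
    congr 1
    · exact ((Nat.cast_smul_eq_nsmul ℝ N v).symm)
    · exact Finset.sum_congr rfl fun i _ => by rw [smul_smul]; ring_nf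
  have hzb : zbar = v - β • wbar := by
    rw [hzbar, hwbar, hzsum, smul_sub, smul_smul, inv_mul_cancel₀ hN', one_smul, smul_comm]
  have hdiff : ∀ i, z i - zbar = -(β • (w i - wbar)) := by
    intro i
    rw [hz i, hzb, hw]
    simp only [smul_sub]
    have : (β * g i / ‖d i‖ ^ 2) • d i = β • (g i / ‖d i‖ ^ 2) • d i := by
      rw [smul_smul]; ring_nf
    rw [this]
    abel
  have hnorm : ∀ i, ‖z i - zbar‖ ^ 2 = β ^ 2 * ‖w i - wbar‖ ^ 2 := by
    intro i
    rw [hdiff i, norm_neg, norm_smul, Real.norm_eq_abs, abs_of_pos hβ, mul_pow]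
  have hzero : ∑ i, (z i - zbar) = 0 := by
    rw [Finset.sum_sub_distrib, Finset.sum_const, Finset.card_univ, Fintype.card_fin,
      ← Nat.cast_smul_eq_nsmul ℝ, hzbar, smul_smul, mul_inv_cancel₀ hN', one_smul, sub_self]
  have hvar : ∑ i, ‖z i - y‖ ^ 2 = ∑ i, ‖z i - zbar‖ ^ 2 + (N:ℝ) * ‖zbar - y‖ ^ 2 := by
    have expand : ∀ i, ‖z i - y‖ ^ 2 = ‖z i - zbar‖ ^ 2
        + 2 * (inner ℝ (z i - zbar) (zbar - y) : ℝ) + ‖zbar - y‖ ^ 2 := by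
      intro i
      have : z i - y = (z i - zbar) + (zbar - y) := by abel
      rw [this, @norm_add_sq_real]
    rw [Finset.sum_congr rfl fun i _ => expand i]
    rw [Finset.sum_add_distrib, Finset.sum_add_distrib]
    have : ∑ i, 2 * (inner ℝ (z i - zbar) (zbar - y) : ℝ) = 0 := by
      rw [← Finset.mul_sum, ← sum_inner, hzero, inner_zero_left, mul_zero]
    rw [this, Finset.sum_const, Finset.card_univ, Fintype.card_fin, nsmul_eq_mul]
    ring
  have hsumstep : ∑ i, ‖z i - y‖ ^ 2 ≤
      (N:ℝ) * ‖v - y‖ ^ 2 - β * (2 - β) * ∑ i, (g i) ^ 2 / ‖d i‖ ^ 2 := by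
    calc ∑ i, ‖z i - y‖ ^ 2 ≤ ∑ i, (‖v - y‖ ^ 2 - β * (2 - β) * (g i) ^ 2 / ‖d i‖ ^ 2) :=
          Finset.sum_le_sum fun i _ => hstep i y hy
      _ = (N:ℝ) * ‖v - y‖ ^ 2 - β * (2 - β) * ∑ i, (g i) ^ 2 / ‖d i‖ ^ 2 := by
          rw [Finset.sum_sub_distrib, Finset.sum_const, Finset.card_univ, Fintype.card_fin,
            nsmul_eq_mul, Finset.mul_sum]
          congr 1
          exact Finset.sum_congr rfl fun i _ => by ring
  have hvarsum : ∑ i, ‖z i - zbar‖ ^ 2 = β ^ 2 * ∑ i, ‖w i - wbar‖ ^ 2 := by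
    rw [Finset.mul_sum]; exact Finset.sum_congr rfl fun i _ => hnorm i
  have key : (N:ℝ) * ‖zbar - y‖ ^ 2 ≤
      (N:ℝ) * ‖v - y‖ ^ 2 - β * (2 - β) * ∑ i, (g i) ^ 2 / ‖d i‖ ^ 2
        - β ^ 2 * ∑ i, ‖w i - wbar‖ ^ 2 := by
    have := hvar ▸ hsumstep
    linarith [hvarsum ▸ this]
  have hT : ∑ i, ‖(g i / ‖d i‖ ^ 2) • d i -
      (N : ℝ)⁻¹ • ∑ j, (g j / ‖d j‖ ^ 2) • d j‖ ^ 2 = ∑ i, ‖w i - wbar‖ ^ 2 := rfl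
  rw [hT]
  have heq : (N:ℝ) * (‖v - y‖ ^ 2 - (β * (2 - β) / N) * (∑ i, g i ^ 2 / ‖d i‖ ^ 2)
      - β ^ 2 * ((N:ℝ)⁻¹ * ∑ i, ‖w i - wbar‖ ^ 2)) =
      (N:ℝ) * ‖v - y‖ ^ 2 - β * (2 - β) * (∑ i, g i ^ 2 / ‖d i‖ ^ 2)
        - β ^ 2 * ∑ i, ‖w i - wbar‖ ^ 2 := by
    field_simp
  have hmul : (N:ℝ) * ‖zbar - y‖ ^ 2 ≤ (N:ℝ) * (‖v - y‖ ^ 2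
      - (β * (2 - β) / N) * (∑ i, g i ^ 2 / ‖d i‖ ^ 2)
      - β ^ 2 * ((N:ℝ)⁻¹ * ∑ i, ‖w i - wbar‖ ^ 2)) := by
    rw [heq]; exact key
  exact le_of_mul_le_mul_left hmul hNpos
end
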